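/- Let V be a Lie superalgebra, and let A = (λ_A, ρ_A) and B = (λ_B, ρ_B) be complex intuitionistic fuzzy Lie ideals of V such that A is homogeneous with B. Then the complex intuitionistic sum A+B = (λ_{A+B}, ρ_{A+B}), with λ_{A+B}(x) = sup_{x=a+b}{λ_A(a) ∧ λ_B(b)} and ρ_{A+B}(x) = inf_{x=a+b}{ρ_A(a) ∨ ρ_B(b)}, is a complex intuitionistic fuzzy Lie ideal of V; in particular λ_{A+B}([x,y]) ≥ λ_{A+B}(x) ∨ λ_{A+B}(y) and ρ_{A+B}([x,y]) ≤ ρ_{A+B}(x) ∧ ρ_{A+B}(y). -/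

import Mathlib

open scoped Classical

noncomputable section

/-- A complex intuitionistic fuzzy set on `V`, given by membership components
`r, w` (modulus and normalized argument of `λ_A`) and non-membership components
`rh, wh` (modulus and normalized argument of `ρ_A`), all in `[0,1]` with `r + rh ≤ 1`. -/
def IsCIFSet {V : Type*} (r w rh wh : V → ℝ) : Prop :=
  (∀ x, r x ∈ Set.Icc (0:ℝ) 1) ∧ (∀ x, w x ∈ Set.Icc (0:ℝ) 1) ∧
  (∀ x, rh x ∈ Set.Icc (0:ℝ) 1) ∧ (∀ x, wh x ∈ Set.Icc (0:ℝ) 1) ∧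
  (∀ x, r x + rh x ≤ 1)

/-- A CIF vector subspace of a `K`-vector space `V` (order on CIF values is componentwise),
with the paper's standing normalization `λ_A(0) = 1`, `ρ_A(0) = 0`. -/
def IsCIFSub (K : Type*) {V : Type*} [Field K] [AddCommGroup V] [Module K V]
    (r w rh wh : V → ℝ) : Prop :=
  (∀ x y : V, min (r x) (r y) ≤ r (x + y)) ∧
  (∀ x y : V, min (w x) (w y) ≤ w (x + y)) ∧
  (∀ x y : V, rh (x + y) ≤ max (rh x) (rh y)) ∧
  (∀ x y : V, wh (x + y) ≤ max (wh x) (wh y)) ∧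
  (∀ (a : K) (x : V), r x ≤ r (a • x)) ∧
  (∀ (a : K) (x : V), w x ≤ w (a • x)) ∧
  (∀ (a : K) (x : V), rh (a • x) ≤ rh x) ∧
  (∀ (a : K) (x : V), wh (a • x) ≤ wh x) ∧
  r 0 = 1 ∧ w 0 = 1 ∧ rh 0 = 0 ∧ wh 0 = 0

/-- `A` is homogeneous with `B`. -/
def Homog {V W : Type*} (rA wA rhA whA : V → ℝ) (rB wB rhB whB : W → ℝ) : Prop :=
  (∀ x y, rA x ≤ rB y ↔ wA x ≤ wB y) ∧ (∀ x y, rhA x ≤ rhB y ↔ whA x ≤ whB y)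

/-- Membership component of the complex intuitionistic sum `A + B`:
`sup_{x = a + b} (f a ⊓ g b)`. -/
def sumSup {V : Type*} [Add V] (f g : V → ℝ) (x : V) : ℝ :=
  sSup {t | ∃ a b, x = a + b ∧ t = min (f a) (g b)}

/-- Non-membership component of the complex intuitionistic sum `A + B`:
`inf_{x = a + b} (f a ⊔ g b)`. -/
def sumInf {V : Type*} [Add V] (f g : V → ℝ) (x : V) : ℝ :=
  sInf {t | ∃ a b, x = a + b ∧ t = max (f a) (g b)}

/-- A Lie superalgebra over `K`: a `Z₂`-graded vector space `V = V₀ ⊕ V₁` with a bilinear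
bracket respecting the grading, super-antisymmetric and satisfying the super Jacobi identity. -/
structure LieSuper (K V : Type*) [Field K] [AddCommGroup V] [Module K V] where
  bracket : V →ₗ[K] V →ₗ[K] V
  grade : ZMod 2 → Submodule K V
  internal : DirectSum.IsInternal grade
  grade_bracket : ∀ (i j : ZMod 2), ∀ x ∈ grade i, ∀ y ∈ grade j, bracket x y ∈ grade (i + j)
  super_skew : ∀ (i j : ZMod 2), ∀ x ∈ grade i, ∀ y ∈ grade j,
    bracket x y = -(((-1 : ℤ) ^ (i.val * j.val)) • bracket y x)
  super_jacobi : ∀ (i j : ZMod 2), ∀ x ∈ grade i, ∀ y ∈ grade j, ∀ z : V,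
    bracket x (bracket y z) - ((-1 : ℤ) ^ (i.val * j.val)) • bracket y (bracket x z)
      = bracket (bracket x y) z

/-- `A = A₀ ⊕ A₁` is a `Z₂`-graded CIF vector subspace of `V`: a CIF vector subspace whose
value at `x = x₀ + x₁` (graded decomposition) is `λ_{A₀}(x₀) ⊓ λ_{A₁}(x₁)` resp.
`ρ_{A₀}(x₀) ⊔ ρ_{A₁}(x₁)`. -/
def IsGradedCIF {K V : Type*} [Field K] [AddCommGroup V] [Module K V]
    (L : LieSuper K V) (r w rh wh : V → ℝ) : Prop :=
  IsCIFSub K r w rh wh ∧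
  ∀ x0 ∈ L.grade 0, ∀ x1 ∈ L.grade 1,
    r (x0 + x1) = min (r x0) (r x1) ∧ w (x0 + x1) = min (w x0) (w x1) ∧
    rh (x0 + x1) = max (rh x0) (rh x1) ∧ wh (x0 + x1) = max (wh x0) (wh x1)

/-- CIF Lie sub-superalgebra: `λ([x,y]) ≥ λ(x) ∧ λ(y)` and `ρ([x,y]) ≤ ρ(x) ∨ ρ(y)`. -/
def IsCIFLieSub {K V : Type*} [Field K] [AddCommGroup V] [Module K V]
    (L : LieSuper K V) (r w rh wh : V → ℝ) : Prop :=
  IsGradedCIF L r w rh wh ∧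
  ∀ x y : V, min (r x) (r y) ≤ r (L.bracket x y) ∧ min (w x) (w y) ≤ w (L.bracket x y) ∧
    rh (L.bracket x y) ≤ max (rh x) (rh y) ∧ wh (L.bracket x y) ≤ max (wh x) (wh y)

/-- CIF ideal: `λ([x,y]) ≥ λ(x) ∨ λ(y)` and `ρ([x,y]) ≤ ρ(x) ∧ ρ(y)`. -/
def IsCIFLieIdeal {K V : Type*} [Field K] [AddCommGroup V] [Module K V]
    (L : LieSuper K V) (r w rh wh : V → ℝ) : Prop :=
  IsGradedCIF L r w rh wh ∧
  ∀ x y : V, max (r x) (r y) ≤ r (L.bracket x y) ∧ max (w x) (w y) ≤ w (L.bracket x y) ∧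
    rh (L.bracket x y) ≤ min (rh x) (rh y) ∧ wh (L.bracket x y) ≤ min (wh x) (wh y)

/-- Anti-CIF Lie sub-superalgebra: `λ(-[x,y]) ≥ λ(x) ∧ λ(y)`, `ρ(-[x,y]) ≤ ρ(x) ∨ ρ(y)`. -/
def IsAntiCIFLieSub {K V : Type*} [Field K] [AddCommGroup V] [Module K V]
    (L : LieSuper K V) (r w rh wh : V → ℝ) : Prop :=
  IsGradedCIF L r w rh wh ∧
  ∀ x y : V, min (r x) (r y) ≤ r (-(L.bracket x y)) ∧ min (w x) (w y) ≤ w (-(L.bracket x y)) ∧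
    rh (-(L.bracket x y)) ≤ max (rh x) (rh y) ∧ wh (-(L.bracket x y)) ≤ max (wh x) (wh y)

/-- Anti-CIF ideal: `λ(-[x,y]) ≥ λ(x) ∨ λ(y)`, `ρ(-[x,y]) ≤ ρ(x) ∧ ρ(y)`. -/
def IsAntiCIFLieIdeal {K V : Type*} [Field K] [AddCommGroup V] [Module K V]
    (L : LieSuper K V) (r w rh wh : V → ℝ) : Prop :=
  IsGradedCIF L r w rh wh ∧
  ∀ x y : V, max (r x) (r y) ≤ r (-(L.bracket x y)) ∧ max (w x) (w y) ≤ w (-(L.bracket x y)) ∧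
    rh (-(L.bracket x y)) ≤ min (rh x) (rh y) ∧ wh (-(L.bracket x y)) ≤ min (wh x) (wh y)

/-- A (crisp) Lie sub-superalgebra of `V`: a `Z₂`-graded subspace closed under the bracket. -/
def IsLieSubSuper {K V : Type*} [Field K] [AddCommGroup V] [Module K V]
    (L : LieSuper K V) (S : Set V) : Prop :=
  (∀ x ∈ S, ∀ y ∈ S, x + y ∈ S) ∧ (∀ (a : K), ∀ x ∈ S, a • x ∈ S) ∧
  (∀ x0 ∈ L.grade 0, ∀ x1 ∈ L.grade 1, x0 + x1 ∈ S → x0 ∈ S ∧ x1 ∈ S) ∧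
  (∀ x ∈ S, ∀ y ∈ S, L.bracket x y ∈ S)

section CIFSumHelpers

variable {V : Type*} [AddCommGroup V] {f g : V → ℝ}

lemma sumSup_set_nonempty (x : V) :
    Set.Nonempty {t | ∃ a b, x = a + b ∧ t = min (f a) (g b)} :=
  ⟨min (f x) (g 0), x, 0, by simp, rfl⟩

lemma sumInf_set_nonempty (x : V) :
    Set.Nonempty {t | ∃ a b, x = a + b ∧ t = max (f a) (g b)} :=
  ⟨max (f x) (g 0), x, 0, by simp, rfl⟩

lemma sumSup_bddAbove (hf : ∀ a, f a ≤ 1) (x : V) :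
    BddAbove {t | ∃ a b, x = a + b ∧ t = min (f a) (g b)} := by
  refine ⟨1, ?_⟩
  rintro t ⟨a, b, -, rfl⟩
  exact min_le_of_left_le (hf a)

lemma sumInf_bddBelow (hf : ∀ a, 0 ≤ f a) (x : V) :
    BddBelow {t | ∃ a b, x = a + b ∧ t = max (f a) (g b)} := by
  refine ⟨0, ?_⟩
  rintro t ⟨a, b, -, rfl⟩
  exact le_max_of_le_left (hf a)

lemma le_sumSup (hf : ∀ a, f a ≤ 1) {x a b : V} (h : x = a + b) :
    min (f a) (g b) ≤ sumSup f g x :=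
  le_csSup (sumSup_bddAbove hf x) ⟨a, b, h, rfl⟩

lemma sumSup_le {x : V} {c : ℝ} (h : ∀ a b, x = a + b → min (f a) (g b) ≤ c) :
    sumSup f g x ≤ c :=
  csSup_le (sumSup_set_nonempty x) (by rintro t ⟨a, b, hab, rfl⟩; exact h a b hab)

lemma sumInf_le (hf : ∀ a, 0 ≤ f a) {x a b : V} (h : x = a + b) :
    sumInf f g x ≤ max (f a) (g b) :=
  csInf_le (sumInf_bddBelow hf x) ⟨a, b, h, rfl⟩

lemma le_sumInf {x : V} {c : ℝ} (h : ∀ a b, x = a + b → c ≤ max (f a) (g b)) :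
    c ≤ sumInf f g x :=
  le_csInf (sumInf_set_nonempty x) (by rintro t ⟨a, b, hab, rfl⟩; exact h a b hab)

lemma exists_decomp_sumSup (x : V) {ε : ℝ} (hε : 0 < ε) :
    ∃ a b, x = a + b ∧ sumSup f g x - ε < min (f a) (g b) := by
  obtain ⟨t, ⟨a, b, hab, rfl⟩, ht⟩ :=
    exists_lt_of_lt_csSup (sumSup_set_nonempty (f := f) (g := g) x) (sub_lt_self _ hε)
  exact ⟨a, b, hab, ht⟩

lemma exists_decomp_sumInf (x : V) {ε : ℝ} (hε : 0 < ε) :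
    ∃ a b, x = a + b ∧ max (f a) (g b) < sumInf f g x + ε := by
  obtain ⟨t, ⟨a, b, hab, rfl⟩, ht⟩ :=
    exists_lt_of_csInf_lt (sumInf_set_nonempty (f := f) (g := g) x)
      (lt_add_of_pos_right _ hε)
  exact ⟨a, b, hab, ht⟩

lemma sumSup_add (hf1 : ∀ a, f a ≤ 1)
    (hfadd : ∀ a c : V, min (f a) (f c) ≤ f (a + c))
    (hgadd : ∀ b d : V, min (g b) (g d) ≤ g (b + d)) (x y : V) :
    min (sumSup f g x) (sumSup f g y) ≤ sumSup f g (x + y) := by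
  refine le_of_forall_pos_le_add fun ε hε => ?_
  obtain ⟨a, b, hx, h1⟩ := exists_decomp_sumSup (f := f) (g := g) x hε
  obtain ⟨c, d, hy, h2⟩ := exists_decomp_sumSup (f := f) (g := g) y hε
  have h3 : min (min (f a) (g b)) (min (f c) (g d)) ≤ min (f (a + c)) (g (b + d)) :=
    le_min (le_trans (min_le_min (min_le_left _ _) (min_le_left _ _)) (hfadd a c))
      (le_trans (min_le_min (min_le_right _ _) (min_le_right _ _)) (hgadd b d))
  have h4 : min (f (a + c)) (g (b + d)) ≤ sumSup f g (x + y) :=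
    le_sumSup hf1 (by rw [hx, hy]; abel)
  have h5 := min_le_left (sumSup f g x) (sumSup f g y)
  have h6 := min_le_right (sumSup f g x) (sumSup f g y)
  have h7 : min (sumSup f g x) (sumSup f g y) - ε ≤ min (min (f a) (g b)) (min (f c) (g d)) :=
    le_min (by linarith) (by linarith)
  linarith

lemma sumInf_add (hf0 : ∀ a, 0 ≤ f a)
    (hfadd : ∀ a c : V, f (a + c) ≤ max (f a) (f c))
    (hgadd : ∀ b d : V, g (b + d) ≤ max (g b) (g d)) (x y : V) :
    sumInf f g (x + y) ≤ max (sumInf f g x) (sumInf f g y) := by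
  refine le_of_forall_pos_le_add fun ε hε => ?_
  obtain ⟨a, b, hx, h1⟩ := exists_decomp_sumInf (f := f) (g := g) x hε
  obtain ⟨c, d, hy, h2⟩ := exists_decomp_sumInf (f := f) (g := g) y hε
  have h3 : max (f (a + c)) (g (b + d)) ≤ max (max (f a) (g b)) (max (f c) (g d)) :=
    max_le (le_trans (hfadd a c) (max_le_max (le_max_left _ _) (le_max_left _ _)))
      (le_trans (hgadd b d) (max_le_max (le_max_right _ _) (le_max_right _ _)))
  have h4 : sumInf f g (x + y) ≤ max (f (a + c)) (g (b + d)) :=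
    sumInf_le hf0 (by rw [hx, hy]; abel)
  have h5 := le_max_left (sumInf f g x) (sumInf f g y)
  have h6 := le_max_right (sumInf f g x) (sumInf f g y)
  have h7 : max (max (f a) (g b)) (max (f c) (g d)) ≤
      max (sumInf f g x) (sumInf f g y) + ε :=
    max_le (by linarith) (by linarith)
  linarith

lemma sumSup_map (hf1 : ∀ a, f a ≤ 1) (T : V → V) (hT : ∀ a b, T (a + b) = T a + T b)
    (hfT : ∀ a, f a ≤ f (T a)) (hgT : ∀ b, g b ≤ g (T b)) (x : V) :
    sumSup f g x ≤ sumSup f g (T x) :=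
  sumSup_le fun a b hab =>
    le_trans (min_le_min (hfT a) (hgT b)) (le_sumSup hf1 (by rw [hab, hT]))

lemma sumInf_map (hf0 : ∀ a, 0 ≤ f a) (T : V → V) (hT : ∀ a b, T (a + b) = T a + T b)
    (hfT : ∀ a, f (T a) ≤ f a) (hgT : ∀ b, g (T b) ≤ g b) (x : V) :
    sumInf f g (T x) ≤ sumInf f g x :=
  le_sumInf fun a b hab =>
    le_trans (sumInf_le hf0 (by rw [hab, hT])) (max_le_max (hfT a) (hgT b))

lemma sumSup_zero (hf1 : ∀ a, f a ≤ 1) (hf0 : f 0 = 1) (hg0 : g 0 = 1) :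
    sumSup f g (0 : V) = 1 := by
  refine le_antisymm (sumSup_le fun a b _ => min_le_of_left_le (hf1 a)) ?_
  have := le_sumSup (g := g) hf1 (show (0 : V) = 0 + 0 by simp)
  simpa [hf0, hg0] using this

lemma sumInf_zero (hf : ∀ a, 0 ≤ f a) (hf0 : f 0 = 0) (hg0 : g 0 = 0) :
    sumInf f g (0 : V) = 0 := by
  refine le_antisymm ?_ (le_sumInf fun a b _ => le_max_of_le_left (hf a))
  have := sumInf_le (g := g) hf (show (0 : V) = 0 + 0 by simp)
  simpa [hf0, hg0] using this

lemma sumSup_mem_Icc (hf : ∀ a, f a ∈ Set.Icc (0:ℝ) 1) (hg : ∀ b, g b ∈ Set.Icc (0:ℝ) 1)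
    (x : V) : sumSup f g x ∈ Set.Icc (0:ℝ) 1 :=
  ⟨le_trans (le_min (hf x).1 (hg 0).1)
      (le_sumSup (fun a => (hf a).2) (show x = x + 0 by simp)),
   sumSup_le fun a b _ => min_le_of_left_le (hf a).2⟩

lemma sumInf_mem_Icc (hf : ∀ a, f a ∈ Set.Icc (0:ℝ) 1) (hg : ∀ b, g b ∈ Set.Icc (0:ℝ) 1)
    (x : V) : sumInf f g x ∈ Set.Icc (0:ℝ) 1 :=
  ⟨le_sumInf fun a b _ => le_trans (hf a).1 (le_max_left _ _),
   le_trans (sumInf_le (fun a => (hf a).1) (show x = x + 0 by simp))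
     (max_le (hf x).2 (hg 0).2)⟩

end CIFSumHelpers

lemma LieSuper.exists_decomp {K V : Type*} [Field K] [AddCommGroup V] [Module K V]
    (L : LieSuper K V) (x : V) : ∃ x0 ∈ L.grade 0, ∃ x1 ∈ L.grade 1, x = x0 + x1 := by
  have htop : L.grade 0 ⊔ L.grade 1 = ⊤ := by
    have h := L.internal.submodule_iSup_eq_top
    refine le_antisymm le_top ?_
    rw [← h]
    exact iSup_le fun i => by fin_cases i <;> [exact le_sup_left; exact le_sup_right]
  have hx : x ∈ L.grade 0 ⊔ L.grade 1 := htop ▸ Submodule.mem_top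
  obtain ⟨x0, hx0, x1, hx1, hsum⟩ := Submodule.mem_sup.mp hx
  exact ⟨x0, hx0, x1, hx1, hsum.symm⟩

lemma LieSuper.decomp_unique {K V : Type*} [Field K] [AddCommGroup V] [Module K V]
    (L : LieSuper K V) {x0 y0 x1 y1 : V} (h0 : x0 ∈ L.grade 0) (h0' : y0 ∈ L.grade 0)
    (h1 : x1 ∈ L.grade 1) (h1' : y1 ∈ L.grade 1) (h : x0 + x1 = y0 + y1) :
    x0 = y0 ∧ x1 = y1 := by
  have hdis : Disjoint (L.grade 0) (L.grade 1) :=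
    L.internal.submodule_iSupIndep.pairwiseDisjoint
      (show (0 : ZMod 2) ≠ 1 by decide)
  have hmem0 : x0 - y0 ∈ L.grade 0 := sub_mem h0 h0'
  have hmem1 : x0 - y0 ∈ L.grade 1 := by
    have heq : x0 - y0 = y1 - x1 := by
      rw [sub_eq_sub_iff_add_eq_add, h, add_comm]
    rw [heq]; exact sub_mem h1' h1
  have hz : x0 - y0 = 0 := Submodule.disjoint_def.mp hdis _ hmem0 hmem1
  have e0 : x0 = y0 := sub_eq_zero.mp hz
  refine ⟨e0, ?_⟩
  have := h
  rw [e0] at this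
  exact add_left_cancel this

lemma sumSup_graded {K V : Type*} [Field K] [AddCommGroup V] [Module K V]
    (L : LieSuper K V) {f g : V → ℝ} (hf1 : ∀ a, f a ≤ 1)
    (hfadd : ∀ a c, min (f a) (f c) ≤ f (a + c))
    (hgadd : ∀ b d, min (g b) (g d) ≤ g (b + d))
    (hfgr : ∀ a0 ∈ L.grade 0, ∀ a1 ∈ L.grade 1, f (a0 + a1) = min (f a0) (f a1))
    (hggr : ∀ b0 ∈ L.grade 0, ∀ b1 ∈ L.grade 1, g (b0 + b1) = min (g b0) (g b1))
    {x0 x1 : V} (h0 : x0 ∈ L.grade 0) (h1 : x1 ∈ L.grade 1) :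
    sumSup f g (x0 + x1) = min (sumSup f g x0) (sumSup f g x1) := by
  refine le_antisymm (sumSup_le fun a b hab => ?_) (sumSup_add hf1 hfadd hgadd x0 x1)
  obtain ⟨a0, ha0, a1, ha1, rfl⟩ := L.exists_decomp a
  obtain ⟨b0, hb0, b1, hb1, rfl⟩ := L.exists_decomp b
  have heq : x0 + x1 = (a0 + b0) + (a1 + b1) := by rw [hab]; abel
  obtain ⟨e0, e1⟩ := L.decomp_unique h0 (add_mem ha0 hb0) h1 (add_mem ha1 hb1) heq
  rw [hfgr a0 ha0 a1 ha1, hggr b0 hb0 b1 hb1, min_min_min_comm]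
  exact min_le_min (le_sumSup hf1 e0) (le_sumSup hf1 e1)

lemma sumInf_graded {K V : Type*} [Field K] [AddCommGroup V] [Module K V]
    (L : LieSuper K V) {f g : V → ℝ} (hf0 : ∀ a, 0 ≤ f a)
    (hfadd : ∀ a c, f (a + c) ≤ max (f a) (f c))
    (hgadd : ∀ b d, g (b + d) ≤ max (g b) (g d))
    (hfgr : ∀ a0 ∈ L.grade 0, ∀ a1 ∈ L.grade 1, f (a0 + a1) = max (f a0) (f a1))
    (hggr : ∀ b0 ∈ L.grade 0, ∀ b1 ∈ L.grade 1, g (b0 + b1) = max (g b0) (g b1))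
    {x0 x1 : V} (h0 : x0 ∈ L.grade 0) (h1 : x1 ∈ L.grade 1) :
    sumInf f g (x0 + x1) = max (sumInf f g x0) (sumInf f g x1) := by
  refine le_antisymm (sumInf_add hf0 hfadd hgadd x0 x1) (le_sumInf fun a b hab => ?_)
  obtain ⟨a0, ha0, a1, ha1, rfl⟩ := L.exists_decomp a
  obtain ⟨b0, hb0, b1, hb1, rfl⟩ := L.exists_decomp b
  have heq : x0 + x1 = (a0 + b0) + (a1 + b1) := by rw [hab]; abel
  obtain ⟨e0, e1⟩ := L.decomp_unique h0 (add_mem ha0 hb0) h1 (add_mem ha1 hb1) heq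
  rw [hfgr a0 ha0 a1 ha1, hggr b0 hb0 b1 hb1, max_max_max_comm]
  exact max_le_max (sumInf_le hf0 e0) (sumInf_le hf0 e1)

/-- the complex intuitionistic sum of two CIF ideals (`A` homogeneous with `B`)
is a CIF ideal; in particular `λ_{A+B}([x,y]) ≥ λ_{A+B}(x) ∨ λ_{A+B}(y)` and
`ρ_{A+B}([x,y]) ≤ ρ_{A+B}(x) ∧ ρ_{A+B}(y)`. -/
theorem cif_sum_ideal {K V : Type*} [Field K] [AddCommGroup V] [Module K V]
    (L : LieSuper K V) (rA wA rhA whA rB wB rhB whB : V → ℝ)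
    (hASet : IsCIFSet rA wA rhA whA) (hBSet : IsCIFSet rB wB rhB whB)
    (hA : IsCIFLieIdeal L rA wA rhA whA) (hB : IsCIFLieIdeal L rB wB rhB whB)
    (hhom : Homog rA wA rhA whA rB wB rhB whB) :
    IsCIFSet (sumSup rA rB) (sumSup wA wB) (sumInf rhA rhB) (sumInf whA whB) ∧
    IsCIFLieIdeal L (sumSup rA rB) (sumSup wA wB) (sumInf rhA rhB) (sumInf whA whB) := by
  obtain ⟨hAr, hAw, hArh, hAwh, hAsum⟩ := hASet
  obtain ⟨hBr, hBw, hBrh, hBwh, hBsum⟩ := hBSet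
  obtain ⟨⟨⟨aAr, aAw, aArh, aAwh, sAr, sAw, sArh, sAwh, zAr, zAw, zArh, zAwh⟩, grA⟩, brA⟩ := hA
  obtain ⟨⟨⟨aBr, aBw, aBrh, aBwh, sBr, sBw, sBrh, sBwh, zBr, zBw, zBrh, zBwh⟩, grB⟩, brB⟩ := hB
  have hAr1 : ∀ a, rA a ≤ 1 := fun a => (hAr a).2
  have hAw1 : ∀ a, wA a ≤ 1 := fun a => (hAw a).2
  have hArh0 : ∀ a, 0 ≤ rhA a := fun a => (hArh a).1
  have hAwh0 : ∀ a, 0 ≤ whA a := fun a => (hAwh a).1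
  constructor
  · -- IsCIFSet
    refine ⟨sumSup_mem_Icc hAr hBr, sumSup_mem_Icc hAw hBw,
      sumInf_mem_Icc hArh hBrh, sumInf_mem_Icc hAwh hBwh, fun x => ?_⟩
    have h : sumSup rA rB x ≤ 1 - sumInf rhA rhB x := by
      refine sumSup_le fun a b hab => ?_
      have h1 := sumInf_le (f := rhA) (g := rhB) hArh0 hab
      rcases le_total (rhA a) (rhB b) with hc | hc
      · rw [max_eq_right hc] at h1
        have := min_le_right (rA a) (rB b)
        linarith [hBsum b]
      · rw [max_eq_left hc] at h1
        have := min_le_left (rA a) (rB b)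
        linarith [hAsum a]
    linarith
  · -- IsCIFLieIdeal
    refine ⟨⟨⟨?_, ?_, ?_, ?_, ?_, ?_, ?_, ?_, ?_, ?_, ?_, ?_⟩, ?_⟩, ?_⟩
    · exact sumSup_add hAr1 aAr aBr
    · exact sumSup_add hAw1 aAw aBw
    · exact sumInf_add hArh0 aArh aBrh
    · exact sumInf_add hAwh0 aAwh aBwh
    · exact fun k x => sumSup_map hAr1 (k • ·) (fun a b => smul_add k a b)
        (sAr k) (sBr k) x
    · exact fun k x => sumSup_map hAw1 (k • ·) (fun a b => smul_add k a b)
        (sAw k) (sBw k) x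
    · exact fun k x => sumInf_map hArh0 (k • ·) (fun a b => smul_add k a b)
        (sArh k) (sBrh k) x
    · exact fun k x => sumInf_map hAwh0 (k • ·) (fun a b => smul_add k a b)
        (sAwh k) (sBwh k) x
    · exact sumSup_zero hAr1 zAr zBr
    · exact sumSup_zero hAw1 zAw zBw
    · exact sumInf_zero hArh0 zArh zBrh
    · exact sumInf_zero hAwh0 zAwh zBwh
    · -- graded
      intro x0 h0 x1 h1
      exact ⟨sumSup_graded L hAr1 aAr aBr
          (fun a0 ha0 a1 ha1 => (grA a0 ha0 a1 ha1).1)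
          (fun b0 hb0 b1 hb1 => (grB b0 hb0 b1 hb1).1) h0 h1,
        sumSup_graded L hAw1 aAw aBw
          (fun a0 ha0 a1 ha1 => (grA a0 ha0 a1 ha1).2.1)
          (fun b0 hb0 b1 hb1 => (grB b0 hb0 b1 hb1).2.1) h0 h1,
        sumInf_graded L hArh0 aArh aBrh
          (fun a0 ha0 a1 ha1 => (grA a0 ha0 a1 ha1).2.2.1)
          (fun b0 hb0 b1 hb1 => (grB b0 hb0 b1 hb1).2.2.1) h0 h1,
        sumInf_graded L hAwh0 aAwh aBwh
          (fun a0 ha0 a1 ha1 => (grA a0 ha0 a1 ha1).2.2.2)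
          (fun b0 hb0 b1 hb1 => (grB b0 hb0 b1 hb1).2.2.2) h0 h1⟩
    · -- ideal bracket property
      intro x y
      have hT1 : ∀ a b : V, L.bracket (a + b) y = L.bracket a y + L.bracket b y := by
        intro a b; rw [map_add]; rfl
      have hT2 : ∀ a b : V, L.bracket x (a + b) = L.bracket x a + L.bracket x b := by
        intro a b; rw [map_add]
      refine ⟨max_le ?_ ?_, max_le ?_ ?_, le_min ?_ ?_, le_min ?_ ?_⟩
      · exact sumSup_map hAr1 (fun a => L.bracket a y) hT1
          (fun a => le_trans (le_max_left _ _) (brA a y).1)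
          (fun b => le_trans (le_max_left _ _) (brB b y).1) x
      · exact sumSup_map hAr1 (fun b => L.bracket x b) hT2
          (fun a => le_trans (le_max_right _ _) (brA x a).1)
          (fun b => le_trans (le_max_right _ _) (brB x b).1) y
      · exact sumSup_map hAw1 (fun a => L.bracket a y) hT1
          (fun a => le_trans (le_max_left _ _) (brA a y).2.1)
          (fun b => le_trans (le_max_left _ _) (brB b y).2.1) x
      · exact sumSup_map hAw1 (fun b => L.bracket x b) hT2
          (fun a => le_trans (le_max_right _ _) (brA x a).2.1)
          (fun b => le_trans (le_max_right _ _) (brB x b).2.1) y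
      · exact sumInf_map hArh0 (fun a => L.bracket a y) hT1
          (fun a => le_trans (brA a y).2.2.1 (min_le_left _ _))
          (fun b => le_trans (brB b y).2.2.1 (min_le_left _ _)) x
      · exact sumInf_map hArh0 (fun b => L.bracket x b) hT2
          (fun a => le_trans (brA x a).2.2.1 (min_le_right _ _))
          (fun b => le_trans (brB x b).2.2.1 (min_le_right _ _)) y
      · exact sumInf_map hAwh0 (fun a => L.bracket a y) hT1
          (fun a => le_trans (brA a y).2.2.2 (min_le_left _ _))
          (fun b => le_trans (brB b y).2.2.2 (min_le_left _ _)) x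
      · exact sumInf_map hAwh0 (fun b => L.bracket x b) hT2
          (fun a => le_trans (brA x a).2.2.2 (min_le_right _ _))
          (fun b => le_trans (brB x b).2.2.2 (min_le_right _ _)) y
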